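/- arXiv:1906.05758 — 7 statements merged into one kernel-verified Lean document; each statement's English description precedes it below -/
import Mathlib

section
/- Let W be an ℓ×ℓ real positive definite matrix, Γ an ℓ×q real matrix such that Ψ := Γᵀ W⁻¹ Γ is positive definite, V a q×q real positive definite matrix, z ∈ ℝ^ℓ and e ∈ ℝ^q. With c(z) := Ψ⁻¹ Γᵀ W⁻¹ z, the field implausibility decomposes as the sum of the reconstruction error and the coefficient implausibility: (z − Γe)ᵀ (Γ V Γᵀ + W)⁻¹ (z − Γe) = (z − Γ c(z))ᵀ W⁻¹ (z − Γ c(z)) + (c(z) − e)ᵀ (V + Ψ⁻¹)⁻¹ (c(z) − e). -/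
open Matrix

private lemma dot_aux {a b : ℕ} (X : Matrix (Fin a) (Fin b) ℝ) (u : Fin b → ℝ)
    (v : Fin a → ℝ) : (X *ᵥ u) ⬝ᵥ v = u ⬝ᵥ (Xᵀ *ᵥ v) := by
  rw [dotProduct_mulVec, vecMul_transpose]

private lemma quad_aux {a b : ℕ} (X : Matrix (Fin a) (Fin b) ℝ)
    (N : Matrix (Fin a) (Fin a) ℝ) (Y : Matrix (Fin a) (Fin b) ℝ) (u : Fin b → ℝ) :
    (X *ᵥ u) ⬝ᵥ (N *ᵥ (Y *ᵥ u)) = u ⬝ᵥ ((Xᵀ * N * Y) *ᵥ u) := by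
  rw [dot_aux, mulVec_mulVec, mulVec_mulVec]

/-- Theorem 1 of Salter & Williamson: the field implausibility decomposes as the sum of
the reconstruction error and the coefficient implausibility, when projection is performed
in the `W`-norm. Here `W = Σ_e + Σ_η`, `Γ` is the truncated basis, `V = Var[c(x)]`,
`e = E[c(x)]`, and `c(z) = (Γᵀ W⁻¹ Γ)⁻¹ Γᵀ W⁻¹ z`. -/
theorem field_implausibility_decomposition
    {ℓ q : ℕ} (W : Matrix (Fin ℓ) (Fin ℓ) ℝ) (hW : W.PosDef)
    (Γ : Matrix (Fin ℓ) (Fin q) ℝ) (hΨ : (Γᵀ * W⁻¹ * Γ).PosDef)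
    (V : Matrix (Fin q) (Fin q) ℝ) (hV : V.PosDef)
    (z : Fin ℓ → ℝ) (e : Fin q → ℝ) :
    (z - Γ *ᵥ e) ⬝ᵥ ((Γ * V * Γᵀ + W)⁻¹ *ᵥ (z - Γ *ᵥ e)) =
      (z - Γ *ᵥ (((Γᵀ * W⁻¹ * Γ)⁻¹ * Γᵀ * W⁻¹) *ᵥ z)) ⬝ᵥ
          (W⁻¹ *ᵥ (z - Γ *ᵥ (((Γᵀ * W⁻¹ * Γ)⁻¹ * Γᵀ * W⁻¹) *ᵥ z))) +
      ((((Γᵀ * W⁻¹ * Γ)⁻¹ * Γᵀ * W⁻¹) *ᵥ z - e) ⬝ᵥ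
          ((V + (Γᵀ * W⁻¹ * Γ)⁻¹)⁻¹ *ᵥ ((((Γᵀ * W⁻¹ * Γ)⁻¹ * Γᵀ * W⁻¹) *ᵥ z) - e))) := by
  set A := W⁻¹ with hAdef
  set Ψ := Γᵀ * A * Γ with hΨdef
  set K := (V + Ψ⁻¹)⁻¹ with hKdef
  set M := Γ * V * Γᵀ + W with hMdef
  set P := Ψ⁻¹ * Γᵀ * A with hPdef
  set u := z - Γ *ᵥ e with hudef
  -- basic invertibility and symmetry facts
  have hWA : W * A = 1 := Matrix.mul_nonsing_inv W hW.det_pos.ne'.isUnit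
  have hΨΨi : Ψ * Ψ⁻¹ = 1 := Matrix.mul_nonsing_inv Ψ hΨ.det_pos.ne'.isUnit
  have hΨiΨ : Ψ⁻¹ * Ψ = 1 := Matrix.nonsing_inv_mul Ψ hΨ.det_pos.ne'.isUnit
  have hSpd : (V + Ψ⁻¹).PosDef := hV.add hΨ.inv
  have hSK : (V + Ψ⁻¹) * K = 1 := Matrix.mul_nonsing_inv _ hSpd.det_pos.ne'.isUnit
  have hAsym : Aᵀ = A := by
    rw [hAdef, Matrix.transpose_nonsing_inv]
    congr 1
    simpa [Matrix.conjTranspose_eq_transpose_of_trivial] using hW.isHermitian.eq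
  have hΨisym : (Ψ⁻¹)ᵀ = Ψ⁻¹ := by
    rw [Matrix.transpose_nonsing_inv]
    congr 1
    simpa [Matrix.conjTranspose_eq_transpose_of_trivial] using hΨ.isHermitian.eq
  -- rewrite rules (right-associated forms)
  have hWAx : ∀ {n : ℕ} (X : Matrix (Fin ℓ) (Fin n) ℝ), W * (A * X) = X := by
    intro n X; rw [← Matrix.mul_assoc, hWA, Matrix.one_mul]
  have hGAGb : Γᵀ * (A * Γ) = Ψ := by rw [← Matrix.mul_assoc]
  have hGAG : ∀ {n : ℕ} (X : Matrix (Fin q) (Fin n) ℝ),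
      Γᵀ * (A * (Γ * X)) = Ψ * X := by
    intro n X
    rw [← Matrix.mul_assoc A Γ X, ← Matrix.mul_assoc Γᵀ (A * Γ) X, hGAGb]
  have hΨΨix : ∀ {n : ℕ} (X : Matrix (Fin q) (Fin n) ℝ), Ψ * (Ψ⁻¹ * X) = X := by
    intro n X; rw [← Matrix.mul_assoc, hΨΨi, Matrix.one_mul]
  have hΨiΨx : ∀ {n : ℕ} (X : Matrix (Fin q) (Fin n) ℝ), Ψ⁻¹ * (Ψ * X) = X := by
    intro n X; rw [← Matrix.mul_assoc, hΨiΨ, Matrix.one_mul]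
  have hVKb : V * K = 1 - Ψ⁻¹ * K := by
    rw [eq_sub_iff_add_eq, ← Matrix.add_mul]; exact hSK
  have hVK : ∀ {n : ℕ} (X : Matrix (Fin q) (Fin n) ℝ),
      V * (K * X) = X - Ψ⁻¹ * (K * X) := by
    intro n X
    rw [← Matrix.mul_assoc, hVKb, Matrix.sub_mul, Matrix.one_mul, Matrix.mul_assoc]
  -- the key matrix identity : M⁻¹ = E
  set E := A - A * Γ * Ψ⁻¹ * Γᵀ * A + A * Γ * Ψ⁻¹ * K * Ψ⁻¹ * Γᵀ * A with hEdef
  have key3 : M * E = 1 := by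
    rw [hMdef, hEdef]
    simp only [Matrix.mul_assoc, Matrix.mul_add, Matrix.add_mul, Matrix.mul_sub,
      Matrix.sub_mul, Matrix.mul_one, Matrix.one_mul, hWA, hWAx, hGAG, hGAGb,
      hΨΨix, hΨiΨx, hΨΨi, hΨiΨ, hVK, hVKb]
    abel
  have hMinv : M⁻¹ = E := Matrix.inv_eq_right_inv key3
  -- reduction of the vectors
  have hPΓ : P * Γ = 1 := by
    rw [hPdef, Matrix.mul_assoc, Matrix.mul_assoc, hGAGb, hΨiΨ]
  have hPu : P *ᵥ u = P *ᵥ z - e := by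
    rw [hudef, mulVec_sub, mulVec_mulVec, hPΓ, one_mulVec]
  have hzc : z - Γ *ᵥ (P *ᵥ z) = (1 - Γ * P) *ᵥ u := by
    have h1 : (1 - Γ * P) *ᵥ u = u - Γ *ᵥ (P *ᵥ u) := by
      rw [sub_mulVec, Matrix.one_mulVec, mulVec_mulVec]
    rw [h1, hPu, mulVec_sub, hudef]
    abel
  -- the decomposition as a matrix identity
  have hPT : Pᵀ = A * Γ * Ψ⁻¹ := by
    rw [hPdef, Matrix.transpose_mul, Matrix.transpose_mul, hAsym, hΨisym,
      Matrix.transpose_transpose, Matrix.mul_assoc]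
  have hmat : (1 - Γ * P)ᵀ * A * (1 - Γ * P) + Pᵀ * K * P = E := by
    rw [Matrix.transpose_sub, Matrix.transpose_one, Matrix.transpose_mul, hPT,
      hPdef, hEdef]
    simp only [Matrix.mul_assoc, Matrix.mul_add, Matrix.add_mul, Matrix.mul_sub,
      Matrix.sub_mul, Matrix.mul_one, Matrix.one_mul, hWA, hWAx, hGAG, hGAGb,
      hΨΨix, hΨiΨx, hΨΨi, hΨiΨ]
    abel
  -- assemble
  rw [hMinv, hzc, ← hPu, quad_aux, quad_aux, ← dotProduct_add, ← add_mulVec, hmat]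
end

section
/- Let W be an ℓ×ℓ real positive definite matrix, Γ an ℓ×q real matrix such that Ψ := Γᵀ W⁻¹ Γ is positive definite, V a q×q real positive definite matrix, z ∈ ℝ^ℓ and e ∈ ℝ^q. Writing r := z − Γe, the field implausibility expands as rᵀ (Γ V Γᵀ + W)⁻¹ r = rᵀ W⁻¹ r − rᵀ W⁻¹ Γ Ψ⁻¹ Γᵀ W⁻¹ r + rᵀ W⁻¹ Γ Ψ⁻¹ (V + Ψ⁻¹)⁻¹ Ψ⁻¹ Γᵀ W⁻¹ r. -/
open Matrix

/-- Woodbury expansion of the field implausibility: with `r = z − Γe` and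
`Ψ = Γᵀ W⁻¹ Γ`,
`rᵀ (Γ V Γᵀ + W)⁻¹ r = rᵀ W⁻¹ r − rᵀ W⁻¹ Γ Ψ⁻¹ Γᵀ W⁻¹ r + rᵀ W⁻¹ Γ Ψ⁻¹ (V + Ψ⁻¹)⁻¹ Ψ⁻¹ Γᵀ W⁻¹ r`. -/
theorem field_implausibility_woodbury_expansion
    {ℓ q : ℕ} (W : Matrix (Fin ℓ) (Fin ℓ) ℝ) (hW : W.PosDef)
    (Γ : Matrix (Fin ℓ) (Fin q) ℝ) (hΨ : (Γᵀ * W⁻¹ * Γ).PosDef)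
    (V : Matrix (Fin q) (Fin q) ℝ) (hV : V.PosDef)
    (z : Fin ℓ → ℝ) (e : Fin q → ℝ) :
    (z - Γ *ᵥ e) ⬝ᵥ ((Γ * V * Γᵀ + W)⁻¹ *ᵥ (z - Γ *ᵥ e)) =
      (z - Γ *ᵥ e) ⬝ᵥ (W⁻¹ *ᵥ (z - Γ *ᵥ e))
      - (z - Γ *ᵥ e) ⬝ᵥ ((W⁻¹ * Γ * (Γᵀ * W⁻¹ * Γ)⁻¹ * Γᵀ * W⁻¹) *ᵥ (z - Γ *ᵥ e))
      + (z - Γ *ᵥ e) ⬝ᵥ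
          ((W⁻¹ * Γ * (Γᵀ * W⁻¹ * Γ)⁻¹ * (V + (Γᵀ * W⁻¹ * Γ)⁻¹)⁻¹ *
              (Γᵀ * W⁻¹ * Γ)⁻¹ * Γᵀ * W⁻¹) *ᵥ (z - Γ *ᵥ e)) := by
  set Ψ : Matrix (Fin q) (Fin q) ℝ := Γᵀ * W⁻¹ * Γ with hΨdef
  have hVinv : V⁻¹⁻¹ = V := by
    rw [Matrix.nonsing_inv_nonsing_inv _ ((Matrix.isUnit_iff_isUnit_det _).1 hV.isUnit)]
  -- first Woodbury application
  have h1 : IsUnit (V⁻¹ + Γᵀ * W⁻¹ * Γ) := (hV.inv.add hΨ).isUnit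
  have stepA : (Γ * V * Γᵀ + W)⁻¹ = W⁻¹ - W⁻¹ * Γ * (V⁻¹ + Ψ)⁻¹ * Γᵀ * W⁻¹ := by
    rw [add_comm]
    exact Matrix.add_mul_mul_inv_eq_sub W Γ V Γᵀ hW.isUnit hV.isUnit h1
  -- second Woodbury application
  have h2 : IsUnit (V⁻¹⁻¹ + (1 : Matrix (Fin q) (Fin q) ℝ) * Ψ⁻¹ * 1) := by
    rw [hVinv, one_mul, mul_one]
    exact (hV.add hΨ.inv).isUnit
  have stepB : (V⁻¹ + Ψ)⁻¹ = Ψ⁻¹ - Ψ⁻¹ * (V + Ψ⁻¹)⁻¹ * Ψ⁻¹ := by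
    have := Matrix.add_mul_mul_inv_eq_sub Ψ 1 V⁻¹ 1 hΨ.isUnit hV.inv.isUnit h2
    simpa [hVinv, add_comm, Matrix.mul_assoc] using this
  have key : (Γ * V * Γᵀ + W)⁻¹ =
      W⁻¹ - W⁻¹ * Γ * Ψ⁻¹ * Γᵀ * W⁻¹
        + W⁻¹ * Γ * Ψ⁻¹ * (V + Ψ⁻¹)⁻¹ * Ψ⁻¹ * Γᵀ * W⁻¹ := by
    rw [stepA, stepB]
    simp only [Matrix.mul_sub, Matrix.sub_mul, Matrix.mul_assoc]
    abel
  rw [key, Matrix.add_mulVec, Matrix.sub_mulVec, dotProduct_add, dotProduct_sub]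
end

section
/- Let W be an ℓ×ℓ real positive definite matrix, Γ an ℓ×q real matrix such that Ψ := Γᵀ W⁻¹ Γ is positive definite, V a q×q real positive definite matrix, z ∈ ℝ^ℓ, and T a real number. If the reconstruction error (z − Γ c(z))ᵀ W⁻¹ (z − Γ c(z)) exceeds T, where c(z) := Ψ⁻¹ Γᵀ W⁻¹ z, then for every e ∈ ℝ^q the field implausibility (z − Γe)ᵀ (Γ V Γᵀ + W)⁻¹ (z − Γe) also exceeds T. -/
/-!
Let `c = c(z)` be the generalized least-squares coefficient, `r = z - Γ c` the reconstruction
residual and `u = W⁻¹ r`. The normal equations say `Γᵀ u = 0`, so with `M = Γ V Γᵀ + W` we get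
`M u = r` and `u ⬝ (z - Γ e) = u ⬝ r` for every `e`. The quadratic form of `M⁻¹` is the supremum
of `2 x ⬝ v - x ⬝ M x`; evaluating at `x = u` bounds the field implausibility below by
`2 u ⬝ r - u ⬝ r = rᵀ W⁻¹ r`, the reconstruction error.
-/

open Matrix

namespace Matrix

variable {n m : Type*} [Fintype n] [DecidableEq n] [Fintype m] [DecidableEq m]

theorem PosDef.two_mul_dotProduct_sub_le {M : Matrix n n ℝ} (hM : M.PosDef) (x v : n → ℝ) :
    2 * (x ⬝ᵥ v) - x ⬝ᵥ M *ᵥ x ≤ v ⬝ᵥ M⁻¹ *ᵥ v := by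
  set y := M⁻¹ *ᵥ v
  have hMy : M *ᵥ y = v := by
    rw [mulVec_mulVec, mul_nonsing_inv M ((isUnit_iff_isUnit_det M).mp hM.isUnit), one_mulVec]
  have hsymm : y ⬝ᵥ M *ᵥ x = x ⬝ᵥ M *ᵥ y := by
    conv_lhs => rw [← hM.isHermitian.eq, conjTranspose_eq_transpose_of_trivial]
    exact dotProduct_transpose_mulVec M y x
  have hnonneg : 0 ≤ (x - y) ⬝ᵥ M *ᵥ (x - y) := by
    simpa using hM.posSemidef.dotProduct_mulVec_nonneg (x - y)
  simp only [mulVec_sub, dotProduct_sub, sub_dotProduct, hsymm, hMy] at hnonneg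
  rw [dotProduct_comm v y]
  linarith

noncomputable def glsCoeff (W : Matrix n n ℝ) (Γ : Matrix n m ℝ) (z : n → ℝ) : m → ℝ :=
  ((Γᵀ * W⁻¹ * Γ)⁻¹ * Γᵀ * W⁻¹) *ᵥ z

theorem transpose_mulVec_inv_mulVec_sub_glsCoeff_eq_zero {W : Matrix n n ℝ}
    {Γ : Matrix n m ℝ} (hΨ : IsUnit (Γᵀ * W⁻¹ * Γ).det) (z : n → ℝ) :
    Γᵀ *ᵥ (W⁻¹ *ᵥ (z - Γ *ᵥ glsCoeff W Γ z)) = 0 := by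
  have hnormal : (Γᵀ * W⁻¹ * Γ) *ᵥ glsCoeff W Γ z = (Γᵀ * W⁻¹) *ᵥ z := by
    rw [glsCoeff, mulVec_mulVec, ← Matrix.mul_assoc, ← Matrix.mul_assoc,
      mul_nonsing_inv _ hΨ, Matrix.one_mul]
  simp only [mulVec_sub, mulVec_mulVec, ← Matrix.mul_assoc, hnormal, sub_self]

end Matrix

/-- The terminal case: if the reconstruction error of `z` on the truncated basis exceeds
the history-matching bound `T`, then the field implausibility exceeds `T` for every
emulator coefficient expectation `e`, so NROY space is guaranteed to be empty. -/
theorem terminal_case_empty_NROY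
    {ℓ q : ℕ} (W : Matrix (Fin ℓ) (Fin ℓ) ℝ) (hW : W.PosDef)
    (Γ : Matrix (Fin ℓ) (Fin q) ℝ) (hΨ : (Γᵀ * W⁻¹ * Γ).PosDef)
    (V : Matrix (Fin q) (Fin q) ℝ) (hV : V.PosDef)
    (z : Fin ℓ → ℝ) (T : ℝ)
    (hR : T < (z - Γ *ᵥ (((Γᵀ * W⁻¹ * Γ)⁻¹ * Γᵀ * W⁻¹) *ᵥ z)) ⬝ᵥ
        (W⁻¹ *ᵥ (z - Γ *ᵥ (((Γᵀ * W⁻¹ * Γ)⁻¹ * Γᵀ * W⁻¹) *ᵥ z)))) :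
    ∀ e : Fin q → ℝ,
      T < (z - Γ *ᵥ e) ⬝ᵥ ((Γ * V * Γᵀ + W)⁻¹ *ᵥ (z - Γ *ᵥ e)) := by
  intro e
  set c := glsCoeff W Γ z
  set r := z - Γ *ᵥ c
  set u := W⁻¹ *ᵥ r
  have horth : Γᵀ *ᵥ u = 0 :=
    transpose_mulVec_inv_mulVec_sub_glsCoeff_eq_zero ((isUnit_iff_isUnit_det _).mp hΨ.isUnit) z
  have hMu : (Γ * V * Γᵀ + W) *ᵥ u = r := by
    rw [add_mulVec, ← mulVec_mulVec, horth, mulVec_zero, zero_add, mulVec_mulVec,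
      mul_nonsing_inv W ((isUnit_iff_isUnit_det W).mp hW.isUnit), one_mulVec]
  have hur : u ⬝ᵥ (z - Γ *ᵥ e) = u ⬝ᵥ r := by
    rw [show z - Γ *ᵥ e = r + Γ *ᵥ (c - e) by simp only [r, mulVec_sub]; abel,
      dotProduct_add, dotProduct_mulVec, ← mulVec_transpose, horth, zero_dotProduct, add_zero]
  have hM : (Γ * V * Γᵀ + W).PosDef := by
    refine PosDef.posSemidef_add ?_ hW
    simpa [conjTranspose_eq_transpose_of_trivial] using hV.posSemidef.mul_mul_conjTranspose_same Γ
  have hbound := hM.two_mul_dotProduct_sub_le u (z - Γ *ᵥ e)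
  rw [hur, hMu, dotProduct_comm u r] at hbound
  have hρ : T < r ⬝ᵥ u := hR
  linarith
end

section
/- Let W be an ℓ×ℓ real positive definite matrix, Γ an ℓ×q real matrix such that Ψ := Γᵀ W⁻¹ Γ is positive definite, V a q×q real positive definite matrix, and z ∈ ℝ^ℓ with c(z) := Ψ⁻¹ Γᵀ W⁻¹ z. If the reconstruction error vanishes, i.e. (z − Γ c(z))ᵀ W⁻¹ (z − Γ c(z)) = 0, then for every e ∈ ℝ^q the field implausibility equals the coefficient implausibility: (z − Γe)ᵀ (Γ V Γᵀ + W)⁻¹ (z − Γe) = (c(z) − e)ᵀ (V + Ψ⁻¹)⁻¹ (c(z) − e). -/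
/-!
Vanishing reconstruction error forces `z = Γ c(z)`, since `W⁻¹` is positive definite. Then
`z - Γ e = Γ (c(z) - e)`, and the field implausibility becomes the quadratic form of
`Γᵀ (Γ V Γᵀ + W)⁻¹ Γ` at `c(z) - e`. This matrix equals `(V + Ψ⁻¹)⁻¹` by the push-through identity
`(V + Ψ⁻¹) Γᵀ = Ψ⁻¹ Γᵀ W⁻¹ (Γ V Γᵀ + W)`.
-/

open Matrix

theorem Matrix.PosDef.eq_zero_of_dotProduct_mulVec_self_eq_zero {n R : Type*} [Fintype n]
    [CommRing R] [PartialOrder R] [StarRing R] {M : Matrix n n R} (hM : M.PosDef) {x : n → R}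
    (hx : star x ⬝ᵥ (M *ᵥ x) = 0) : x = 0 := by
  by_contra h
  exact (hM.dotProduct_mulVec_pos h).ne' hx

theorem Matrix.dotProduct_mulVec_mulVec_eq_transpose_mul_mul {m n R : Type*} [Fintype m]
    [Fintype n] [CommRing R] (A : Matrix m m R) (B : Matrix m n R) (x : n → R) :
    (B *ᵥ x) ⬝ᵥ (A *ᵥ (B *ᵥ x)) = x ⬝ᵥ ((Bᵀ * A * B) *ᵥ x) := by
  rw [← mulVec_mulVec, ← mulVec_mulVec, dotProduct_mulVec x Bᵀ, vecMul_transpose]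

theorem Matrix.transpose_mul_inv_add_mul_eq_inv_add_inv {m n R : Type*} [Fintype m]
    [DecidableEq m] [Fintype n] [DecidableEq n] [CommRing R] (W : Matrix m m R) (Γ : Matrix m n R)
    (V : Matrix n n R) (hW : IsUnit W) (hΨ : IsUnit (Γᵀ * W⁻¹ * Γ))
    (hS : IsUnit (Γ * V * Γᵀ + W)) :
    Γᵀ * (Γ * V * Γᵀ + W)⁻¹ * Γ = (V + (Γᵀ * W⁻¹ * Γ)⁻¹)⁻¹ := by
  rw [isUnit_iff_isUnit_det] at hW hΨ hS
  set Ψ := Γᵀ * W⁻¹ * Γ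
  set S := Γ * V * Γᵀ + W
  have push_through : (V + Ψ⁻¹) * Γᵀ = Ψ⁻¹ * (Γᵀ * W⁻¹ * S) := by
    have expand : Γᵀ * W⁻¹ * S = Ψ * V * Γᵀ + Γᵀ := by
      simp only [S, Ψ, Matrix.mul_add, Matrix.mul_assoc, nonsing_inv_mul _ hW, Matrix.mul_one]
    rw [expand, Matrix.mul_add, ← Matrix.mul_assoc, ← Matrix.mul_assoc, nonsing_inv_mul _ hΨ,
      Matrix.one_mul, Matrix.add_mul]
  refine (inv_eq_right_inv ?_).symm
  calc (V + Ψ⁻¹) * (Γᵀ * S⁻¹ * Γ) = Ψ⁻¹ * (Γᵀ * W⁻¹ * S) * S⁻¹ * Γ := by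
        rw [← push_through]; simp only [Matrix.mul_assoc]
    _ = Ψ⁻¹ * Ψ := by simp only [Ψ, Matrix.mul_assoc, mul_nonsing_inv_cancel_left _ _ hS]
    _ = 1 := nonsing_inv_mul _ hΨ

/-- If the observations are represented perfectly by the basis (the reconstruction
error vanishes), then the field implausibility coincides with the `W`-projected
coefficient implausibility. -/
theorem zero_reconstruction_error_implausibilities_agree
    {ℓ q : ℕ} (W : Matrix (Fin ℓ) (Fin ℓ) ℝ) (hW : W.PosDef)
    (Γ : Matrix (Fin ℓ) (Fin q) ℝ) (hΨ : (Γᵀ * W⁻¹ * Γ).PosDef)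
    (V : Matrix (Fin q) (Fin q) ℝ) (hV : V.PosDef)
    (z : Fin ℓ → ℝ)
    (hR : (z - Γ *ᵥ (((Γᵀ * W⁻¹ * Γ)⁻¹ * Γᵀ * W⁻¹) *ᵥ z)) ⬝ᵥ
        (W⁻¹ *ᵥ (z - Γ *ᵥ (((Γᵀ * W⁻¹ * Γ)⁻¹ * Γᵀ * W⁻¹) *ᵥ z))) = 0) :
    ∀ e : Fin q → ℝ,
      (z - Γ *ᵥ e) ⬝ᵥ ((Γ * V * Γᵀ + W)⁻¹ *ᵥ (z - Γ *ᵥ e)) =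
        ((((Γᵀ * W⁻¹ * Γ)⁻¹ * Γᵀ * W⁻¹) *ᵥ z - e) ⬝ᵥ
          ((V + (Γᵀ * W⁻¹ * Γ)⁻¹)⁻¹ *ᵥ ((((Γᵀ * W⁻¹ * Γ)⁻¹ * Γᵀ * W⁻¹) *ᵥ z) - e))) := by
  intro e
  set c := ((Γᵀ * W⁻¹ * Γ)⁻¹ * Γᵀ * W⁻¹) *ᵥ z
  have hz : z = Γ *ᵥ c := sub_eq_zero.mp (hW.inv.eq_zero_of_dotProduct_mulVec_self_eq_zero hR)
  have hS : (Γ * V * Γᵀ + W).PosDef := by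
    simpa using PosDef.posSemidef_add (hV.posSemidef.mul_mul_conjTranspose_same Γ) hW
  rw [hz, ← mulVec_sub, dotProduct_mulVec_mulVec_eq_transpose_mul_mul,
    transpose_mul_inv_add_mul_eq_inv_add_inv W Γ V hW.isUnit hΨ.isUnit hS.isUnit]
end

section
/- Let W be an ℓ×ℓ real positive definite matrix, Γ an ℓ×q real matrix such that Ψ := Γᵀ W⁻¹ Γ is positive definite, z ∈ ℝ^ℓ with c(z) := Ψ⁻¹ Γᵀ W⁻¹ z, and let V₁, V₂ be q×q real positive definite matrices and e₁, e₂ ∈ ℝ^q. Then (z − Γe₁)ᵀ (Γ V₁ Γᵀ + W)⁻¹ (z − Γe₁) < (z − Γe₂)ᵀ (Γ V₂ Γᵀ + W)⁻¹ (z − Γe₂) if and only if (c(z) − e₁)ᵀ (V₁ + Ψ⁻¹)⁻¹ (c(z) − e₁) < (c(z) − e₂)ᵀ (V₂ + Ψ⁻¹)⁻¹ (c(z) − e₂). -/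
open Matrix

lemma impl_decomp {ℓ q : ℕ} (W : Matrix (Fin ℓ) (Fin ℓ) ℝ) (hW : W.PosDef)
    (Γ : Matrix (Fin ℓ) (Fin q) ℝ) (hΨ : (Γᵀ * W⁻¹ * Γ).PosDef)
    (z : Fin ℓ → ℝ) (V : Matrix (Fin q) (Fin q) ℝ) (hV : V.PosDef) (e : Fin q → ℝ) :
    (z - Γ *ᵥ e) ⬝ᵥ ((Γ * V * Γᵀ + W)⁻¹ *ᵥ (z - Γ *ᵥ e)) =
    ((((Γᵀ * W⁻¹ * Γ)⁻¹ * Γᵀ * W⁻¹) *ᵥ z - e) ⬝ᵥ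
        ((V + (Γᵀ * W⁻¹ * Γ)⁻¹)⁻¹ *ᵥ ((((Γᵀ * W⁻¹ * Γ)⁻¹ * Γᵀ * W⁻¹) *ᵥ z) - e)))
    + z ⬝ᵥ ((W⁻¹ - W⁻¹ * Γ * (Γᵀ * W⁻¹ * Γ)⁻¹ * (Γᵀ * W⁻¹)) *ᵥ z) := by
  set Ψ : Matrix (Fin q) (Fin q) ℝ := Γᵀ * W⁻¹ * Γ with hΨdef
  set P : Matrix (Fin q) (Fin ℓ) ℝ := Ψ⁻¹ * Γᵀ * W⁻¹ with hPdef
  set S : Matrix (Fin ℓ) (Fin ℓ) ℝ := W⁻¹ - W⁻¹ * Γ * Ψ⁻¹ * (Γᵀ * W⁻¹) with hSdef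
  set K : Matrix (Fin q) (Fin q) ℝ := V + Ψ⁻¹ with hKdef
  have hK : K.PosDef := hV.add hΨ.inv
  have hWd : IsUnit W.det := (Matrix.isUnit_iff_isUnit_det W).mp hW.isUnit
  have hΨd : IsUnit Ψ.det := (Matrix.isUnit_iff_isUnit_det Ψ).mp hΨ.isUnit
  have hKd : IsUnit K.det := (Matrix.isUnit_iff_isUnit_det K).mp hK.isUnit
  have hWs : Wᵀ = W := by
    rw [← Matrix.conjTranspose_eq_transpose_of_trivial]; exact hW.isHermitian.eq
  have hΨs : Ψᵀ = Ψ := by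
    rw [← Matrix.conjTranspose_eq_transpose_of_trivial]; exact hΨ.isHermitian.eq
  have hWis : W⁻¹ᵀ = W⁻¹ := by rw [Matrix.transpose_nonsing_inv, hWs]
  have hΨis : Ψ⁻¹ᵀ = Ψ⁻¹ := by rw [Matrix.transpose_nonsing_inv, hΨs]
  -- cancellation helpers
  have hPG : P * Γ = 1 := by
    rw [hPdef, Matrix.mul_assoc, Matrix.mul_assoc, ← Matrix.mul_assoc Γᵀ, ← hΨdef,
      Matrix.nonsing_inv_mul Ψ hΨd]
  have hGWG : ∀ X : Matrix (Fin q) (Fin ℓ) ℝ,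
      Γᵀ * (W⁻¹ * (Γ * (Ψ⁻¹ * X))) = X := by
    intro X
    rw [← Matrix.mul_assoc, ← Matrix.mul_assoc, ← Matrix.mul_assoc, ← hΨdef,
      Matrix.mul_assoc Ψ, ← Matrix.mul_assoc Ψ, Matrix.mul_nonsing_inv Ψ hΨd, Matrix.one_mul]
  have hVK : ∀ X : Matrix (Fin q) (Fin ℓ) ℝ,
      V * (K⁻¹ * X) = X - Ψ⁻¹ * (K⁻¹ * X) := by
    intro X
    have h1 : (V + Ψ⁻¹) * (K⁻¹ * X) = X := by
      rw [← Matrix.mul_assoc, ← hKdef, Matrix.mul_nonsing_inv K hKd, Matrix.one_mul]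
    rw [Matrix.add_mul] at h1
    exact eq_sub_of_add_eq h1
  have hΨ' : Γᵀ * (W⁻¹ * Γ) = Ψ := by rw [hΨdef, Matrix.mul_assoc]
  have hSΓ : S * Γ = 0 := by
    rw [hSdef, Matrix.sub_mul]
    simp only [Matrix.mul_assoc]
    rw [hΨ', Matrix.nonsing_inv_mul Ψ hΨd, Matrix.mul_one, sub_self]
  have hAinv : (Γ * V * Γᵀ + W)⁻¹ = (W⁻¹ * Γ * Ψ⁻¹) * K⁻¹ * P + S := by
    haveI := W.invertibleOfIsUnitDet hWd
    apply Matrix.inv_eq_right_inv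
    simp only [hPdef, hSdef, Matrix.mul_assoc, Matrix.mul_add, Matrix.add_mul, Matrix.mul_sub, Matrix.sub_mul,
      Matrix.mul_inv_cancel_left_of_invertible, hGWG, hVK,
      Matrix.mul_nonsing_inv W hWd]
    abel
  have hPT : Pᵀ = W⁻¹ * Γ * Ψ⁻¹ := by
    rw [hPdef, Matrix.transpose_mul, Matrix.transpose_mul, hWis, hΨis,
      Matrix.transpose_transpose, Matrix.mul_assoc]
  have hΓS : Γᵀ * S = 0 := by
    rw [hSdef, Matrix.mul_sub]
    simp only [← Matrix.mul_assoc]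
    rw [← hΨdef, Matrix.mul_nonsing_inv Ψ hΨd, Matrix.one_mul, sub_self]
  set y : Fin ℓ → ℝ := z - Γ *ᵥ e with hy
  have hPy : P *ᵥ y = P *ᵥ z - e := by
    rw [hy, Matrix.mulVec_sub, Matrix.mulVec_mulVec, hPG, Matrix.one_mulVec]
  have hSy : S *ᵥ y = S *ᵥ z := by
    rw [hy, Matrix.mulVec_sub, Matrix.mulVec_mulVec, hSΓ, Matrix.zero_mulVec, sub_zero]
  have hyS : y ⬝ᵥ (S *ᵥ z) = z ⬝ᵥ (S *ᵥ z) := by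
    rw [hy, sub_dotProduct]
    have : (Γ *ᵥ e) ⬝ᵥ (S *ᵥ z) = 0 := by
      rw [Matrix.dotProduct_mulVec, Matrix.vecMul_mulVec, hΓS, Matrix.vecMul_zero,
        zero_dotProduct]
    rw [this, sub_zero]
  rw [hAinv, Matrix.add_mulVec, dotProduct_add, ← Matrix.mulVec_mulVec,
    ← Matrix.mulVec_mulVec, Matrix.dotProduct_mulVec y, ← hPT, Matrix.vecMul_transpose,
    hPy, hSy, hyS]

/-- The ordering of input settings by the `W`-projected coefficient implausibility agrees
exactly with the ordering by the field implausibility, since the two differ by the fixed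
reconstruction error. -/
theorem coefficient_implausibility_preserves_ordering
    {ℓ q : ℕ} (W : Matrix (Fin ℓ) (Fin ℓ) ℝ) (hW : W.PosDef)
    (Γ : Matrix (Fin ℓ) (Fin q) ℝ) (hΨ : (Γᵀ * W⁻¹ * Γ).PosDef)
    (z : Fin ℓ → ℝ)
    (V₁ V₂ : Matrix (Fin q) (Fin q) ℝ) (hV₁ : V₁.PosDef) (hV₂ : V₂.PosDef)
    (e₁ e₂ : Fin q → ℝ) :
    (z - Γ *ᵥ e₁) ⬝ᵥ ((Γ * V₁ * Γᵀ + W)⁻¹ *ᵥ (z - Γ *ᵥ e₁)) <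
      (z - Γ *ᵥ e₂) ⬝ᵥ ((Γ * V₂ * Γᵀ + W)⁻¹ *ᵥ (z - Γ *ᵥ e₂)) ↔
    ((((Γᵀ * W⁻¹ * Γ)⁻¹ * Γᵀ * W⁻¹) *ᵥ z - e₁) ⬝ᵥ
        ((V₁ + (Γᵀ * W⁻¹ * Γ)⁻¹)⁻¹ *ᵥ ((((Γᵀ * W⁻¹ * Γ)⁻¹ * Γᵀ * W⁻¹) *ᵥ z) - e₁))) <
      ((((Γᵀ * W⁻¹ * Γ)⁻¹ * Γᵀ * W⁻¹) *ᵥ z - e₂) ⬝ᵥ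
        ((V₂ + (Γᵀ * W⁻¹ * Γ)⁻¹)⁻¹ *ᵥ ((((Γᵀ * W⁻¹ * Γ)⁻¹ * Γᵀ * W⁻¹) *ᵥ z) - e₂))) := by
  rw [impl_decomp W hW Γ hΨ z V₁ hV₁ e₁, impl_decomp W hW Γ hΨ z V₂ hV₂ e₂,
    add_lt_add_iff_right]
end

section
/- Let W be an ℓ×ℓ real positive definite matrix, Γ an ℓ×q real matrix such that Ψ := Γᵀ W⁻¹ Γ is positive definite, and z ∈ ℝ^ℓ with c(z) := Ψ⁻¹ Γᵀ W⁻¹ z. Then for every q×q real positive definite V, the minimum over e ∈ ℝ^q of the field implausibility (z − Γe)ᵀ (Γ V Γᵀ + W)⁻¹ (z − Γe) equals the reconstruction error (z − Γ c(z))ᵀ W⁻¹ (z − Γ c(z)), and this minimum is attained at e = c(z). -/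
/-!
Write `c = c(z)` and `r = z - Γ c` for the residual of the `W⁻¹`-weighted least-squares fit of `z`
on the columns of `Γ`. The normal equations say `Γᵀ W⁻¹ r = 0`, so `(Γ V Γᵀ + W) (W⁻¹ r) = r`, i.e.
`(Γ V Γᵀ + W)⁻¹ r = W⁻¹ r`: on the residual the field-implausibility form agrees with the
reconstruction-error form. For any `e`, `z - Γ e = r + Γ (c - e)` splits into the residual and a
vector in the range of `Γ`, which is `(Γ V Γᵀ + W)⁻¹`-orthogonal to `r`; a Pythagorean expansion of
the positive semidefinite form then bounds the implausibility below by its value at `r`.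
-/

open Matrix

namespace Matrix

theorem transpose_mul_mulVec_sub_weightedProjection_eq_zero
    {m n R : Type*} [Fintype m] [Fintype n] [DecidableEq n] [CommRing R]
    (A : Matrix m m R) (Γ : Matrix m n R) (hΨ : IsUnit (Γᵀ * A * Γ).det) (z : m → R) :
    (Γᵀ * A) *ᵥ (z - Γ *ᵥ (((Γᵀ * A * Γ)⁻¹ * Γᵀ * A) *ᵥ z)) = 0 := by
  have hnormal : (Γᵀ * A) *ᵥ (Γ *ᵥ (((Γᵀ * A * Γ)⁻¹ * Γᵀ * A) *ᵥ z)) = (Γᵀ * A) *ᵥ z := by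
    simp only [mulVec_mulVec, ← Matrix.mul_assoc]
    rw [Matrix.mul_nonsing_inv _ hΨ, Matrix.one_mul]
  rw [mulVec_sub, hnormal, sub_self]

theorem add_inv_mulVec_eq_inv_mulVec_of_mulVec_eq_zero
    {m R : Type*} [Fintype m] [DecidableEq m] [CommRing R]
    {M W : Matrix m m R} (hW : IsUnit W.det) (hMW : IsUnit (M + W).det) {r : m → R}
    (h : M *ᵥ (W⁻¹ *ᵥ r) = 0) :
    (M + W)⁻¹ *ᵥ r = W⁻¹ *ᵥ r := by
  have hsolve : (M + W) *ᵥ (W⁻¹ *ᵥ r) = r := by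
    rw [add_mulVec, h, mulVec_mulVec, Matrix.mul_nonsing_inv _ hW, one_mulVec, zero_add]
  conv_lhs => rw [← hsolve]
  rw [mulVec_mulVec, Matrix.nonsing_inv_mul _ hMW, one_mulVec]

theorem PosSemidef.dotProduct_mulVec_le_add
    {n : Type*} [Fintype n] {B : Matrix n n ℝ} (hB : B.PosSemidef) {r x : n → ℝ}
    (h : x ⬝ᵥ (B *ᵥ r) = 0) :
    r ⬝ᵥ (B *ᵥ r) ≤ (r + x) ⬝ᵥ (B *ᵥ (r + x)) := by
  have hsymm : r ⬝ᵥ (B *ᵥ x) = x ⬝ᵥ (B *ᵥ r) := by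
    rw [dotProduct_mulVec, ← mulVec_transpose, dotProduct_comm,
      ← conjTranspose_eq_transpose_of_trivial, hB.isHermitian.eq]
  have hx : 0 ≤ x ⬝ᵥ (B *ᵥ x) := by simpa using hB.dotProduct_mulVec_nonneg x
  simp only [mulVec_add, dotProduct_add, add_dotProduct, hsymm, h]
  linarith

end Matrix

/-- The best implausibility achievable over the basis subspace is precisely the `W`-norm
reconstruction error of `z` on the basis: the field implausibility is bounded below by
the reconstruction error for every `e`, and the bound is attained at `e = c(z)`. -/
theorem min_field_implausibility_eq_reconstruction_error
    {ℓ q : ℕ} (W : Matrix (Fin ℓ) (Fin ℓ) ℝ) (hW : W.PosDef)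
    (Γ : Matrix (Fin ℓ) (Fin q) ℝ) (hΨ : (Γᵀ * W⁻¹ * Γ).PosDef)
    (z : Fin ℓ → ℝ) :
    ∀ (V : Matrix (Fin q) (Fin q) ℝ), V.PosDef →
      (∀ e : Fin q → ℝ,
        (z - Γ *ᵥ (((Γᵀ * W⁻¹ * Γ)⁻¹ * Γᵀ * W⁻¹) *ᵥ z)) ⬝ᵥ
            (W⁻¹ *ᵥ (z - Γ *ᵥ (((Γᵀ * W⁻¹ * Γ)⁻¹ * Γᵀ * W⁻¹) *ᵥ z))) ≤
          (z - Γ *ᵥ e) ⬝ᵥ ((Γ * V * Γᵀ + W)⁻¹ *ᵥ (z - Γ *ᵥ e))) ∧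
      (z - Γ *ᵥ (((Γᵀ * W⁻¹ * Γ)⁻¹ * Γᵀ * W⁻¹) *ᵥ z)) ⬝ᵥ
          ((Γ * V * Γᵀ + W)⁻¹ *ᵥ (z - Γ *ᵥ (((Γᵀ * W⁻¹ * Γ)⁻¹ * Γᵀ * W⁻¹) *ᵥ z))) =
        (z - Γ *ᵥ (((Γᵀ * W⁻¹ * Γ)⁻¹ * Γᵀ * W⁻¹) *ᵥ z)) ⬝ᵥ
          (W⁻¹ *ᵥ (z - Γ *ᵥ (((Γᵀ * W⁻¹ * Γ)⁻¹ * Γᵀ * W⁻¹) *ᵥ z))) := by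
  intro V hV
  set c := ((Γᵀ * W⁻¹ * Γ)⁻¹ * Γᵀ * W⁻¹) *ᵥ z
  set r := z - Γ *ᵥ c
  have horth : (Γᵀ * W⁻¹) *ᵥ r = 0 :=
    transpose_mul_mulVec_sub_weightedProjection_eq_zero _ Γ
      ((isUnit_iff_isUnit_det _).mp hΨ.isUnit) z
  have hS : (Γ * V * Γᵀ + W).PosDef := by
    refine PosDef.posSemidef_add ?_ hW
    simpa using hV.posSemidef.mul_mul_conjTranspose_same Γ
  have hSr : (Γ * V * Γᵀ + W)⁻¹ *ᵥ r = W⁻¹ *ᵥ r := by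
    refine add_inv_mulVec_eq_inv_mulVec_of_mulVec_eq_zero
      ((isUnit_iff_isUnit_det _).mp hW.isUnit) ((isUnit_iff_isUnit_det _).mp hS.isUnit) ?_
    rw [mulVec_mulVec, Matrix.mul_assoc, ← mulVec_mulVec, horth, mulVec_zero]
  refine ⟨fun e => ?_, by rw [hSr]⟩
  have hsplit : z - Γ *ᵥ e = r + Γ *ᵥ (c - e) := by rw [mulVec_sub, sub_add_sub_cancel]
  rw [hsplit, ← hSr]
  refine hS.inv.posSemidef.dotProduct_mulVec_le_add ?_
  rw [hSr, dotProduct_comm, dotProduct_mulVec, ← mulVec_transpose, mulVec_mulVec, horth,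
    zero_dotProduct]
end

section
/- Let W be an ℓ×ℓ real positive definite matrix, B an ℓ×r real matrix, Φ an r×r real positive semidefinite matrix, and set W' := W + B Φ Bᵀ. Let Γ be an ℓ×q real matrix such that Ψ' := Γᵀ W'⁻¹ Γ is positive definite, V a q×q real positive definite matrix, z ∈ ℝ^ℓ and e ∈ ℝ^q. Then with c'(z) := Ψ'⁻¹ Γᵀ W'⁻¹ z, (z − Γe)ᵀ (Γ V Γᵀ + W')⁻¹ (z − Γe) = (z − Γ c'(z))ᵀ W'⁻¹ (z − Γ c'(z)) + (c'(z) − e)ᵀ (V + Ψ'⁻¹)⁻¹ (c'(z) − e). -/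
open Matrix

lemma mulVec_congr {m n : ℕ} {M N : Matrix (Fin m) (Fin n) ℝ} (h : M = N)
    (v : Fin n → ℝ) : M *ᵥ v = N *ᵥ v := by rw [h]

lemma symm_dot {n : ℕ} {S : Matrix (Fin n) (Fin n) ℝ} (hS : Sᵀ = S)
    (x y : Fin n → ℝ) : x ⬝ᵥ (S *ᵥ y) = (S *ᵥ x) ⬝ᵥ y := by
  rw [dotProduct_mulVec, ← mulVec_transpose, hS]

/-- The decomposition of the field implausibility (Theorem 1) continues to hold when the
weight matrix is augmented by the basis-truncation uncertainty term `B Φ Bᵀ`, i.e. with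
`W' = W + B Φ Bᵀ`, `Ψ' = Γᵀ W'⁻¹ Γ` and `c'(z) = Ψ'⁻¹ Γᵀ W'⁻¹ z`. -/
theorem field_implausibility_decomposition_with_basis_uncertainty
    {ℓ q r : ℕ} (W : Matrix (Fin ℓ) (Fin ℓ) ℝ) (hW : W.PosDef)
    (B : Matrix (Fin ℓ) (Fin r) ℝ)
    (Φ : Matrix (Fin r) (Fin r) ℝ) (hΦ : Φ.PosSemidef)
    (Γ : Matrix (Fin ℓ) (Fin q) ℝ)
    (hΨ : (Γᵀ * (W + B * Φ * Bᵀ)⁻¹ * Γ).PosDef)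
    (V : Matrix (Fin q) (Fin q) ℝ) (hV : V.PosDef)
    (z : Fin ℓ → ℝ) (e : Fin q → ℝ) :
    (z - Γ *ᵥ e) ⬝ᵥ ((Γ * V * Γᵀ + (W + B * Φ * Bᵀ))⁻¹ *ᵥ (z - Γ *ᵥ e)) =
      (z - Γ *ᵥ (((Γᵀ * (W + B * Φ * Bᵀ)⁻¹ * Γ)⁻¹ * Γᵀ * (W + B * Φ * Bᵀ)⁻¹) *ᵥ z)) ⬝ᵥ
          ((W + B * Φ * Bᵀ)⁻¹ *ᵥ
            (z - Γ *ᵥ (((Γᵀ * (W + B * Φ * Bᵀ)⁻¹ * Γ)⁻¹ * Γᵀ * (W + B * Φ * Bᵀ)⁻¹) *ᵥ z))) +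
      ((((Γᵀ * (W + B * Φ * Bᵀ)⁻¹ * Γ)⁻¹ * Γᵀ * (W + B * Φ * Bᵀ)⁻¹) *ᵥ z - e) ⬝ᵥ
          ((V + (Γᵀ * (W + B * Φ * Bᵀ)⁻¹ * Γ)⁻¹)⁻¹ *ᵥ
            ((((Γᵀ * (W + B * Φ * Bᵀ)⁻¹ * Γ)⁻¹ * Γᵀ * (W + B * Φ * Bᵀ)⁻¹) *ᵥ z) - e))) := by
  have hBΦ : (B * Φ * Bᵀ).PosSemidef := by
    simpa using hΦ.mul_mul_conjTranspose_same B
  set Wl : Matrix (Fin ℓ) (Fin ℓ) ℝ := W + B * Φ * Bᵀ with hWl_def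
  have hWl : Wl.PosDef := hW.add_posSemidef hBΦ
  set Ψ : Matrix (Fin q) (Fin q) ℝ := Γᵀ * Wl⁻¹ * Γ with hΨ_def
  have hΨ' : Ψ.PosDef := hΨ
  have hWli : Wl⁻¹.PosDef := hWl.inv
  have hK : (V⁻¹ + Ψ).PosDef := hV.inv.add hΨ'
  set K : Matrix (Fin q) (Fin q) ℝ := (V⁻¹ + Ψ)⁻¹ with hK_def
  set c : Fin q → ℝ := (Ψ⁻¹ * Γᵀ * Wl⁻¹) *ᵥ z with hc_def
  set d : Fin ℓ → ℝ := z - Γ *ᵥ c with hd_def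
  set f : Fin q → ℝ := c - e with hf_def
  clear_value f d c K Ψ Wl
  have hWlsym : Wl⁻¹ᵀ = Wl⁻¹ := by simpa using hWli.isHermitian.eq
  have eΨ : Ψ * Ψ⁻¹ = 1 := mul_nonsing_inv Ψ ((isUnit_iff_isUnit_det Ψ).mp hΨ'.isUnit)
  have eΨ' : Ψ⁻¹ * Ψ = 1 := nonsing_inv_mul Ψ ((isUnit_iff_isUnit_det Ψ).mp hΨ'.isUnit)
  have eV : V * V⁻¹ = 1 := mul_nonsing_inv V ((isUnit_iff_isUnit_det V).mp hV.isUnit)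
  have eK : (V⁻¹ + Ψ) * K = 1 := by
    rw [hK_def]; exact mul_nonsing_inv _ ((isUnit_iff_isUnit_det _).mp hK.isUnit)
  -- Woodbury
  have hM : (Γ * V * Γᵀ + Wl)⁻¹ = Wl⁻¹ - Wl⁻¹ * Γ * K * Γᵀ * Wl⁻¹ := by
    rw [add_comm, hK_def, hΨ_def]
    exact add_mul_mul_inv_eq_sub Wl Γ V Γᵀ hWl.isUnit hV.isUnit
      (by rw [← hΨ_def]; exact hK.isUnit)
  -- second Woodbury-type identity
  have hSecond : (V + Ψ⁻¹)⁻¹ = Ψ - Ψ * K * Ψ := by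
    refine inv_eq_right_inv ?_
    have h3 : V * Ψ + 1 = V * (V⁻¹ + Ψ) := by rw [mul_add, eV, add_comm]
    have expand : (V + Ψ⁻¹) * (Ψ - Ψ * K * Ψ)
        = V * Ψ + Ψ⁻¹ * Ψ - (V * Ψ + Ψ⁻¹ * Ψ) * (K * Ψ) := by noncomm_ring
    rw [expand, eΨ', h3]
    rw [show V * (V⁻¹ + Ψ) * (K * Ψ) = V * ((V⁻¹ + Ψ) * K) * Ψ by
      simp only [mul_assoc], eK, mul_one, mul_add, eV]
    abel
  -- orthogonality
  have h0 : Γᵀ *ᵥ (Wl⁻¹ *ᵥ d) = 0 := by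
    have hc1 : (Γᵀ * Wl⁻¹ * Γ) *ᵥ c = (Γᵀ * Wl⁻¹) *ᵥ z := by
      rw [hc_def, mulVec_mulVec, ← hΨ_def]
      exact mulVec_congr (by rw [← Matrix.mul_assoc, ← Matrix.mul_assoc, eΨ, Matrix.one_mul]) z
    rw [hd_def, mulVec_sub, mulVec_sub, mulVec_mulVec, mulVec_mulVec, mulVec_mulVec,
      hc1, sub_self]
  have hz : z - Γ *ᵥ e = d + Γ *ᵥ f := by
    rw [hd_def, hf_def, mulVec_sub]; abel
  -- main vector computation
  have hMv : (Γ * V * Γᵀ + Wl)⁻¹ *ᵥ (z - Γ *ᵥ e)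
      = Wl⁻¹ *ᵥ d + (Wl⁻¹ * Γ) *ᵥ (f - K *ᵥ (Ψ *ᵥ f)) := by
    rw [hM, hz, sub_mulVec, mulVec_add, mulVec_add]
    have t1 : (Wl⁻¹ * Γ * K * Γᵀ * Wl⁻¹) *ᵥ d = (Wl⁻¹ * Γ * K) *ᵥ (Γᵀ *ᵥ (Wl⁻¹ *ᵥ d)) := by
      rw [mulVec_mulVec, mulVec_mulVec]
    have t2 : (Wl⁻¹ * Γ * K * Γᵀ * Wl⁻¹) *ᵥ (Γ *ᵥ f) = (Wl⁻¹ * Γ) *ᵥ (K *ᵥ (Ψ *ᵥ f)) := by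
      simp only [mulVec_mulVec]
      exact mulVec_congr (by simp only [hΨ_def, Matrix.mul_assoc]) f
    rw [t1, h0, mulVec_zero, t2]
    have t3 : Wl⁻¹ *ᵥ (Γ *ᵥ f) = (Wl⁻¹ * Γ) *ᵥ f := by rw [mulVec_mulVec]
    rw [t3, mulVec_sub (Wl⁻¹ * Γ), zero_add, add_sub_assoc]
  rw [hMv, hz, hSecond]
  rw [dotProduct_add, add_dotProduct, add_dotProduct]
  have e1 : (Γ *ᵥ f) ⬝ᵥ (Wl⁻¹ *ᵥ d) = 0 := by
    rw [dotProduct_comm, dotProduct_mulVec, ← mulVec_transpose, h0, zero_dotProduct]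
  have e2 : d ⬝ᵥ ((Wl⁻¹ * Γ) *ᵥ (f - K *ᵥ (Ψ *ᵥ f))) = 0 := by
    rw [← mulVec_mulVec, symm_dot hWlsym, dotProduct_mulVec, ← mulVec_transpose, h0,
      zero_dotProduct]
  have e3 : (Γ *ᵥ f) ⬝ᵥ ((Wl⁻¹ * Γ) *ᵥ (f - K *ᵥ (Ψ *ᵥ f)))
      = f ⬝ᵥ ((Ψ - Ψ * K * Ψ) *ᵥ f) := by
    rw [dotProduct_comm, dotProduct_mulVec, ← mulVec_transpose, mulVec_mulVec,
      show Γᵀ * (Wl⁻¹ * Γ) = Ψ by rw [hΨ_def, Matrix.mul_assoc], dotProduct_comm]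
    congr 1
    rw [mulVec_sub Ψ, sub_mulVec]
    simp only [mulVec_mulVec, Matrix.mul_assoc]
  rw [e1, e2, e3, add_zero, zero_add]
end
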